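/- Let W, U, V, Z be finitely-valued random variables such that W − U − Z and U − W − (V,Z) are Markov chains. Let U₀ be the zero-information random variable of W with respect to P_{Z|W}. Then I(W; V | U) ≤ I(W; V | U₀). -/

import Mathlib

open Finset

section PD
variable {Ω α β γ : Type*}

open Classical in
/-- Pushforward distribution of `p` under the random variable `f`. -/
noncomputable def push [Fintype Ω] (p : Ω → ℝ) (f : Ω → α) : α → ℝ :=
  fun a => ∑ ω, if f ω = a then p ω else 0

/-- Shannon entropy (base 2) of a pmf on a finite alphabet. -/
noncomputable def ent [Fintype α] (q : α → ℝ) : ℝ := -∑ a, q a * Real.logb 2 (q a)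

/-- Entropy of a random variable `f` under the distribution `p` on the sample space. -/
noncomputable def H [Fintype Ω] [Fintype α] (p : Ω → ℝ) (f : Ω → α) : ℝ := ent (push p f)

/-- Conditional entropy `H(f | g)`. -/
noncomputable def condH [Fintype Ω] [Fintype α] [Fintype β] (p : Ω → ℝ) (f : Ω → α) (g : Ω → β) : ℝ :=
  H p (fun ω => (f ω, g ω)) - H p g

/-- Mutual information `I(f ; g)`. -/
noncomputable def mi [Fintype Ω] [Fintype α] [Fintype β] (p : Ω → ℝ) (f : Ω → α) (g : Ω → β) : ℝ :=
  H p f + H p g - H p (fun ω => (f ω, g ω))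

/-- Conditional mutual information `I(f ; g | h)`. -/
noncomputable def cmi [Fintype Ω] [Fintype α] [Fintype β] [Fintype γ]
    (p : Ω → ℝ) (f : Ω → α) (g : Ω → β) (h : Ω → γ) : ℝ :=
  condH p f h + condH p g h - condH p (fun ω => (f ω, g ω)) h

/-- `p` is a probability mass function. -/
def IsProb [Fintype Ω] (p : Ω → ℝ) : Prop := (∀ ω, 0 ≤ p ω) ∧ ∑ ω, p ω = 1

/-- Markov chain `f − g − h`: conditional independence of `f` and `h` given `g`,
expressed as `P(a,b,c)·P(b) = P(a,b)·P(b,c)`. -/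
def Markov [Fintype Ω] (p : Ω → ℝ) (f : Ω → α) (g : Ω → β) (h : Ω → γ) : Prop :=
  ∀ a b c, push p (fun ω => (f ω, g ω, h ω)) (a, b, c) * push p g b =
    push p (fun ω => (f ω, g ω)) (a, b) * push p (fun ω => (g ω, h ω)) (b, c)

open Classical in
/-- Kullback–Leibler divergence (base 2), with the sum restricted to the support of `P`. -/
noncomputable def KL [Fintype α] (P Q : α → ℝ) : ℝ :=
  ∑ a, if 0 < P a then P a * Real.logb 2 (P a / Q a) else 0

end PD

/-- The zero-information equivalence: `w₁ ∼ w₂` iff the conditional laws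
`c w₁ = P_{Z|W}(·|w₁)` and `c w₂` coincide. -/
def zeroInfoSetoid {W Z : Type*} (c : W → Z → ℝ) : Setoid W :=
  ⟨fun w₁ w₂ => ∀ z, c w₁ z = c w₂ z,
   ⟨fun _ _ => rfl, fun h z => (h z).symm, fun h₁ h₂ z => (h₁ z).trans (h₂ z)⟩⟩

noncomputable instance {α : Type*} [Fintype α] (s : Setoid α) : Fintype (Quotient s) := by
  classical exact Quotient.fintype s


/-!
The chains `W − U − Z` and `U − W − Z` together say that, for `(w, u)` of positive probability,
the law of `Z` given `W = w` equals its law given `U = u`; hence `U₀` is almost surely a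
function of `U`.
The chain `U − W − V` turns `I(W;V|U)` into `H(V|U) - H(V|W)`, and likewise
`I(W;V|U₀) = H(V|U₀) - H(V|W)` because `U₀` is a function of `W`. The claim thus reduces to
`H(V|U) ≤ H(V|U₀)`, which is `I(V;U|U₀) ≥ 0` (Gibbs' inequality).
-/

section
variable {Ω α β γ δ : Type*} [Fintype Ω] {p : Ω → ℝ}
open Classical

lemma push_eq_push {F : Ω → α} {G : Ω → β} {x : α} {y : β}
    (h : ∀ ω, p ω ≠ 0 → (F ω = x ↔ G ω = y)) : push p F x = push p G y := by
  refine Finset.sum_congr rfl fun ω _ => ?_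
  by_cases hω : p ω = 0
  · simp [hω]
  · simp only [h ω hω]

lemma push_prod_assoc (f : Ω → α) (g : Ω → β) (h : Ω → γ) (a : α) (b : β) (c : γ) :
    push p (fun ω => (f ω, g ω, h ω)) (a, b, c) =
      push p (fun ω => ((f ω, g ω), h ω)) ((a, b), c) :=
  push_eq_push fun _ _ => by simp only [Prod.mk.injEq, and_assoc]

lemma sum_push_mul [Fintype α] (p : Ω → ℝ) (f : Ω → α) (G : α → ℝ) :
    ∑ a, push p f a * G a = ∑ ω, p ω * G (f ω) := by
  simp only [push, Finset.sum_mul]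
  rw [Finset.sum_comm]
  refine Finset.sum_congr rfl fun ω _ => ?_
  simp [ite_mul, Finset.sum_ite_eq]

lemma sum_push [Fintype α] (p : Ω → ℝ) (f : Ω → α) : ∑ a, push p f a = ∑ ω, p ω := by
  simpa using sum_push_mul p f fun _ => 1

lemma sum_push_pair_left [Fintype α] (p : Ω → ℝ) (f : Ω → α) (g : Ω → β) (b : β) :
    ∑ a, push p (fun ω => (f ω, g ω)) (a, b) = push p g b := by
  simp only [push]
  rw [Finset.sum_comm]
  refine Finset.sum_congr rfl fun ω _ => ?_
  by_cases hb : g ω = b <;> simp [hb, Finset.sum_ite_eq]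

lemma push_pair_comp_right [Fintype γ] (F : Ω → α) (h : Ω → γ) (φ : γ → δ) (x : α) (d : δ) :
    push p (fun ω => (F ω, φ (h ω))) (x, d) =
      ∑ c, if φ c = d then push p (fun ω => (F ω, h ω)) (x, c) else 0 := by
  simp only [push, ← Finset.sum_filter]
  rw [Finset.sum_comm]
  refine Finset.sum_congr rfl fun ω _ => ?_
  rw [Finset.sum_filter, Finset.sum_eq_single (h ω)]
  · split_ifs <;> simp_all
  · intro c _ hc
    simp [Ne.symm hc]
  · simp

lemma push_nonneg (hp : ∀ ω, 0 ≤ p ω) (f : Ω → α) (a : α) : 0 ≤ push p f a :=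
  Finset.sum_nonneg fun ω _ => by split_ifs <;> simp [hp ω]

lemma le_push (hp : ∀ ω, 0 ≤ p ω) (f : Ω → α) (ω : Ω) : p ω ≤ push p f (f ω) := by
  simpa [push] using Finset.single_le_sum (f := fun ω' => if f ω' = f ω then p ω' else 0)
    (fun ω' _ => by split_ifs <;> simp [hp ω']) (Finset.mem_univ ω)

lemma push_pos (hp : ∀ ω, 0 ≤ p ω) (f : Ω → α) {ω : Ω} (hω : p ω ≠ 0) :
    0 < push p f (f ω) :=
  ((hp ω).lt_of_ne' hω).trans_le (le_push hp f ω)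

lemma H_eq_sum [Fintype α] (p : Ω → ℝ) (f : Ω → α) :
    H p f = -∑ ω, p ω * Real.logb 2 (push p f (f ω)) := by
  rw [H, ent, sum_push_mul p f fun a => Real.logb 2 (push p f a)]

lemma H_eq_of_iff [Fintype α] [Fintype β] {f : Ω → α} {g : Ω → β}
    (h : ∀ ω ω', p ω ≠ 0 → p ω' ≠ 0 → (f ω' = f ω ↔ g ω' = g ω)) : H p f = H p g := by
  rw [H_eq_sum, H_eq_sum]
  congr 1
  refine Finset.sum_congr rfl fun ω _ => ?_
  by_cases hω : p ω = 0
  · simp [hω]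
  · rw [push_eq_push fun ω' hω' => h ω ω' hω hω']

lemma H_pair_eq_left [Fintype α] [Fintype β] {f : Ω → α} {g : Ω → β}
    (h : ∀ ω ω', p ω ≠ 0 → p ω' ≠ 0 → f ω = f ω' → g ω = g ω') :
    H p (fun ω => (f ω, g ω)) = H p f :=
  H_eq_of_iff fun ω ω' hω hω' =>
    ⟨fun e => congrArg Prod.fst e, fun e => by rw [e, h ω' ω hω' hω e]⟩

lemma cmi_eq [Fintype α] [Fintype β] [Fintype γ] (p : Ω → ℝ) (f : Ω → α) (g : Ω → β)
    (h : Ω → γ) :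
    cmi p f g h = H p (fun ω => (f ω, h ω)) + H p (fun ω => (g ω, h ω))
      - H p (fun ω => ((f ω, g ω), h ω)) - H p h := by
  unfold cmi condH
  ring

/-- Gibbs' inequality. -/
lemma sum_mul_logb_nonpos {b : ℝ} (hb : 1 ≤ b) {r : Ω → ℝ} (hp : ∀ ω, 0 ≤ p ω)
    (hr : ∀ ω, p ω ≠ 0 → 0 < r ω) (hsum : ∑ ω, p ω * r ω ≤ ∑ ω, p ω) :
    ∑ ω, p ω * Real.logb b (r ω) ≤ 0 := by
  have hlog : ∑ ω, p ω * Real.log (r ω) ≤ 0 :=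
    calc ∑ ω, p ω * Real.log (r ω) ≤ ∑ ω, (p ω * r ω - p ω) := by
          refine Finset.sum_le_sum fun ω _ => ?_
          by_cases hω : p ω = 0
          · simp [hω]
          · nlinarith [hp ω, Real.log_le_sub_one_of_pos (hr ω hω)]
      _ ≤ 0 := by rw [Finset.sum_sub_distrib]; linarith
  simp only [Real.logb, mul_div_assoc', ← Finset.sum_div]
  exact div_nonpos_of_nonpos_of_nonneg hlog (Real.log_nonneg hb)

theorem cmi_nonneg [Fintype α] [Fintype β] [Fintype γ] (hp : ∀ ω, 0 ≤ p ω) (f : Ω → α)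
    (g : Ω → β) (h : Ω → γ) : 0 ≤ cmi p f g h := by
  set P₁₃ := push p (fun ω => (f ω, h ω))
  set P₂₃ := push p (fun ω => (g ω, h ω))
  set P₁₂₃ := push p (fun ω => ((f ω, g ω), h ω))
  set P₃ := push p h
  set G : (α × β) × γ → ℝ := fun x => P₁₃ (x.1.1, x.2) * P₂₃ (x.1.2, x.2) / (P₁₂₃ x * P₃ x.2)
  have hcmi : cmi p f g h = -∑ ω, p ω * Real.logb 2 (G ((f ω, g ω), h ω)) := by
    rw [cmi_eq]
    simp only [H_eq_sum, ← Finset.sum_neg_distrib, ← Finset.sum_add_distrib,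
      ← Finset.sum_sub_distrib]
    refine Finset.sum_congr rfl fun ω _ => ?_
    by_cases hω : p ω = 0
    · simp [hω]
    have h₁₃ := push_pos hp (fun ω => (f ω, h ω)) hω
    have h₂₃ := push_pos hp (fun ω => (g ω, h ω)) hω
    have h₁₂₃ := push_pos hp (fun ω => ((f ω, g ω), h ω)) hω
    have h₃ := push_pos hp h hω
    simp only [G]
    rw [Real.logb_div (by positivity) (by positivity), Real.logb_mul h₁₃.ne' h₂₃.ne',
      Real.logb_mul h₁₂₃.ne' h₃.ne']
    ring
  have hsum : ∑ ω, p ω * G ((f ω, g ω), h ω) ≤ ∑ ω, p ω :=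
    calc ∑ ω, p ω * G ((f ω, g ω), h ω) = ∑ x, P₁₂₃ x * G x := (sum_push_mul p _ G).symm
      _ ≤ ∑ x : (α × β) × γ, P₁₃ (x.1.1, x.2) * P₂₃ (x.1.2, x.2) / P₃ x.2 := by
          refine Finset.sum_le_sum fun x _ => ?_
          by_cases hx : P₁₂₃ x = 0
          · rw [hx, zero_mul]
            exact div_nonneg (mul_nonneg (push_nonneg hp _ _) (push_nonneg hp _ _))
              (push_nonneg hp _ _)
          · rw [← mul_div_assoc, mul_div_mul_left _ _ hx]
      _ = ∑ c, P₃ c := by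
          rw [Fintype.sum_prod_type_right]
          refine Finset.sum_congr rfl fun c _ => ?_
          have h₁₃ : ∑ a, P₁₃ (a, c) = P₃ c := sum_push_pair_left p f h c
          have h₂₃ : ∑ b, P₂₃ (b, c) = P₃ c := sum_push_pair_left p g h c
          calc _ = (∑ a, P₁₃ (a, c)) * (∑ b, P₂₃ (b, c)) / P₃ c := by
                rw [Fintype.sum_prod_type, Finset.sum_mul_sum, Finset.sum_div]
                simp only [Finset.sum_div]
            _ = P₃ c := by rw [h₁₃, h₂₃, mul_self_div_self]
      _ = ∑ ω, p ω := sum_push p h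
  rw [hcmi, neg_nonneg]
  refine sum_mul_logb_nonpos one_le_two hp (fun ω hω => ?_) hsum
  have := push_pos hp (fun ω => (f ω, h ω)) hω
  have := push_pos hp (fun ω => (g ω, h ω)) hω
  have := push_pos hp (fun ω => ((f ω, g ω), h ω)) hω
  have := push_pos hp h hω
  positivity

theorem Markov.comp_right [Fintype γ] {f : Ω → α} {g : Ω → β} {h : Ω → γ}
    (hM : Markov p f g h) (φ : γ → δ) : Markov p f g (fun ω => φ (h ω)) := by
  intro a b d
  rw [push_prod_assoc, push_pair_comp_right (fun ω => (f ω, g ω)), push_pair_comp_right g,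
    Finset.sum_mul, Finset.mul_sum]
  refine Finset.sum_congr rfl fun c _ => ?_
  split_ifs
  · rw [← push_prod_assoc, hM]
  · simp

theorem Markov.H_triple_add_H [Fintype α] [Fintype β] [Fintype γ] (hp : ∀ ω, 0 ≤ p ω)
    {f : Ω → α} {g : Ω → β} {h : Ω → γ} (hM : Markov p f g h) :
    H p (fun ω => (f ω, g ω, h ω)) + H p g =
      H p (fun ω => (f ω, g ω)) + H p (fun ω => (g ω, h ω)) := by
  simp only [H_eq_sum, ← neg_add, ← Finset.sum_add_distrib]
  congr 1
  refine Finset.sum_congr rfl fun ω _ => ?_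
  by_cases hω : p ω = 0
  · simp [hω]
  rw [← mul_add, ← mul_add, ← Real.logb_mul (push_pos hp (fun ω => (f ω, g ω, h ω)) hω).ne'
    (push_pos hp g hω).ne', ← Real.logb_mul (push_pos hp (fun ω => (f ω, g ω)) hω).ne'
    (push_pos hp (fun ω => (g ω, h ω)) hω).ne', hM]

/-- The conditional law `P_{h|f}(c|a)`, with junk value `0` when `P(f = a) = 0`. -/
noncomputable def condDist (p : Ω → ℝ) (f : Ω → α) (h : Ω → γ) (a : α) (c : γ) : ℝ :=
  push p (fun ω => (f ω, h ω)) (a, c) / push p f a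

theorem Markov.condDist_eq (hp : ∀ ω, 0 ≤ p ω) {f : Ω → α} {g : Ω → β} {h : Ω → γ}
    (hfgh : Markov p f g h) (hgfh : Markov p g f h) {ω₀ : Ω} (hω₀ : p ω₀ ≠ 0) :
    condDist p f h (f ω₀) = condDist p g h (g ω₀) := by
  funext c
  rw [condDist, condDist, div_eq_div_iff (push_pos hp f hω₀).ne' (push_pos hp g hω₀).ne']
  have hswap₃ : push p (fun ω => (g ω, f ω, h ω)) (g ω₀, f ω₀, c) =
      push p (fun ω => (f ω, g ω, h ω)) (f ω₀, g ω₀, c) :=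
    push_eq_push fun _ _ => by simp only [Prod.mk.injEq]; tauto
  have hswap₂ : push p (fun ω => (g ω, f ω)) (g ω₀, f ω₀) =
      push p (fun ω => (f ω, g ω)) (f ω₀, g ω₀) :=
    push_eq_push fun _ _ => by simp only [Prod.mk.injEq]; tauto
  have h₁ := hfgh (f ω₀) (g ω₀) c
  have h₂ := hgfh (g ω₀) (f ω₀) c
  rw [hswap₃, hswap₂] at h₂
  refine mul_left_cancel₀ (push_pos hp (fun ω => (f ω, g ω)) hω₀).ne' ?_
  linear_combination push p f (f ω₀) * h₁ - push p g (g ω₀) * h₂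

end

/-- Lemma 3 of the paper: if `W − U − Z` and `U − W − (V,Z)` are Markov
chains, and `U₀` is the zero-information variable of `W` w.r.t. `P_{Z|W}`, then
`I(W;V|U) ≤ I(W;V|U₀)`. -/
theorem zero_info_maximal {Ω W U V Z : Type*}
    [Fintype Ω] [Fintype W] [Fintype U] [Fintype V] [Fintype Z]
    (p : Ω → ℝ) (hp : IsProb p)
    (fW : Ω → W) (fU : Ω → U) (fV : Ω → V) (fZ : Ω → Z)
    (hWUZ : Markov p fW fU fZ)
    (hUWVZ : Markov p fU fW (fun ω => (fV ω, fZ ω)))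
    (c : W → Z → ℝ)
    (hc : ∀ w z, c w z = push p (fun ω => (fW ω, fZ ω)) (w, z) / push p fW w) :
    cmi p fW fV fU ≤
      cmi p fW fV (fun ω => Quotient.mk (zeroInfoSetoid c) (fW ω)) := by
  have hp₀ := hp.1
  have hUWV : Markov p fU fW fV := hUWVZ.comp_right Prod.fst
  have hUWZ : Markov p fU fW fZ := hUWVZ.comp_right Prod.snd
  set U₀ : Ω → Quotient (zeroInfoSetoid c) := fun ω => Quotient.mk _ (fW ω)
  have hc_eq : ∀ ω, p ω ≠ 0 → c (fW ω) = condDist p fU fZ (fU ω) := fun ω hω =>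
    funext fun z => (hc _ z).trans (congrFun (hWUZ.condDist_eq hp₀ hUWZ hω) z)
  have hU₀ : ∀ ω ω', p ω ≠ 0 → p ω' ≠ 0 → fU ω = fU ω' → U₀ ω = U₀ ω' :=
    fun ω ω' hω hω' hU => Quotient.sound fun z => by rw [hc_eq ω hω, hc_eq ω' hω', hU]
  have hcmi := cmi_nonneg hp₀ fV fU U₀
  have hchain := hUWV.H_triple_add_H hp₀
  have e₁ : H p (fun ω => ((fW ω, fV ω), fU ω)) = H p (fun ω => (fU ω, fW ω, fV ω)) :=
    H_eq_of_iff fun _ _ _ _ => by simp only [Prod.mk.injEq]; tauto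
  have e₂ : H p (fun ω => (fW ω, fU ω)) = H p (fun ω => (fU ω, fW ω)) :=
    H_eq_of_iff fun _ _ _ _ => by simp only [Prod.mk.injEq]; tauto
  have e₃ : H p (fun ω => (fW ω, U₀ ω)) = H p fW :=
    H_pair_eq_left fun _ _ _ _ e => congrArg (Quotient.mk _) e
  have e₄ : H p (fun ω => ((fW ω, fV ω), U₀ ω)) = H p (fun ω => (fW ω, fV ω)) :=
    H_pair_eq_left fun _ _ _ _ e => congrArg (Quotient.mk _) (congrArg Prod.fst e)
  have e₅ : H p (fun ω => (fU ω, U₀ ω)) = H p fU := H_pair_eq_left hU₀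
  have e₆ : H p (fun ω => ((fV ω, fU ω), U₀ ω)) = H p (fun ω => (fV ω, fU ω)) :=
    H_pair_eq_left fun ω ω' hω hω' e => hU₀ ω ω' hω hω' (congrArg Prod.snd e)
  simp only [cmi_eq] at hcmi ⊢
  linarith
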